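/- arXiv:2102.02177 — 5 statements merged into one kernel-verified Lean document; each statement's English description precedes it below -/
import Mathlib

section
/- For every Wahl continued fraction [a_1,...,a_r] there exist coprime integers 0 < a < m such that [a_1,...,a_r] = m²/(ma-1). -/
/-- Hirzebruch–Jung continued fraction `[a_1,...,a_r] = a_1 - 1/[a_2,...,a_r]`
(with the junk value `1/0 = 0`, so `hj [a] = a`). -/
def hj : List ℤ → ℚ
  | [] => 0
  | a :: l => (a : ℚ) - 1 / hj l

/-- Wahl continued fractions: `[4]` is one, and if `[a_1,...,a_r]` is one, then
so are `[2, a_1,...,a_{r-1}, a_r+1]` and `[a_1+1, a_2,...,a_r, 2]`. -/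
inductive IsWahl : List ℤ → Prop
  | base : IsWahl [4]
  | left (l : List ℤ) (a : ℤ) : IsWahl (l ++ [a]) → IsWahl (2 :: (l ++ [a + 1]))
  | right (a : ℤ) (l : List ℤ) : IsWahl (a :: l) → IsWahl ((a + 1) :: (l ++ [2]))

/-!
The continued fraction `[a_1,...,a_r]` is the ratio of the first column of the transfer matrix
`∏ !![a_i, -1; 1, 0]`, as long as all `a_i ≥ 2`. Since `!![a + 1, -1; 1, 0]` is
`!![1, 1; 0, 1] * !![a, -1; 1, 0] = !![a, -1; 1, 0] * !![1, 0; -1, 1]`, both Wahl moves act on the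
transfer matrix by multiplication with fixed matrices, and they preserve the shape
`!![m², 1 - m(m-a); ma - 1, 1 - a(m-a)]` with `(m, a)` replaced by `(m + a, a)`, respectively
`(2m - a, m)`. Starting from `[4]`, i.e. `(m, a) = (2, 1)`, the theorem follows.
-/

def hjMatrix (a : ℤ) : Matrix (Fin 2) (Fin 2) ℤ := !![a, -1; 1, 0]

def hjTransfer (l : List ℤ) : Matrix (Fin 2) (Fin 2) ℤ := (l.map hjMatrix).prod

def wahlMatrix (m a : ℤ) : Matrix (Fin 2) (Fin 2) ℤ :=
  !![m ^ 2, 1 - m * (m - a); m * a - 1, 1 - a * (m - a)]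

@[simp] lemma hjTransfer_nil : hjTransfer [] = 1 := rfl

@[simp] lemma hjTransfer_cons (a : ℤ) (l : List ℤ) :
    hjTransfer (a :: l) = hjMatrix a * hjTransfer l := List.prod_cons

@[simp] lemma hjTransfer_append (l l' : List ℤ) :
    hjTransfer (l ++ l') = hjTransfer l * hjTransfer l' := by
  simp [hjTransfer]

lemma hjMatrix_add_one_eq_mul_left (a : ℤ) : hjMatrix (a + 1) = !![1, 1; 0, 1] * hjMatrix a := by
  simp [hjMatrix]

lemma hjMatrix_add_one_eq_mul_right (a : ℤ) : hjMatrix (a + 1) = hjMatrix a * !![1, 0; -1, 1] := by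
  simp [hjMatrix]

lemma mul_wahlMatrix_mul_eq_wahlMatrix_add (m a : ℤ) :
    !![1, 1; 0, 1] * wahlMatrix m a * hjMatrix 2 = wahlMatrix (m + a) a := by
  simp only [wahlMatrix, hjMatrix, Matrix.mul_fin_two]
  congr 1
  ring_nf

lemma mul_wahlMatrix_mul_eq_wahlMatrix_two_mul_sub (m a : ℤ) :
    hjMatrix 2 * wahlMatrix m a * !![1, 0; -1, 1] = wahlMatrix (2 * m - a) m := by
  simp only [wahlMatrix, hjMatrix, Matrix.mul_fin_two]
  congr 1
  ring_nf

lemma hjTransfer_cons_apply_zero_zero (a : ℤ) (l : List ℤ) :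
    hjTransfer (a :: l) 0 0 = a * hjTransfer l 0 0 - hjTransfer l 1 0 := by
  simp [hjMatrix, Matrix.mul_apply, sub_eq_add_neg]

lemma hjTransfer_cons_apply_one_zero (a : ℤ) (l : List ℤ) :
    hjTransfer (a :: l) 1 0 = hjTransfer l 0 0 := by
  simp [hjMatrix, Matrix.mul_apply]

lemma hj_eq_hjTransfer_div {l : List ℤ} (hl : ∀ x ∈ l, 2 ≤ x) :
    0 ≤ hjTransfer l 1 0 ∧ hjTransfer l 1 0 < hjTransfer l 0 0 ∧
      hj l = hjTransfer l 0 0 / hjTransfer l 1 0 := by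
  induction l with
  | nil => simp [hj]
  | cons a l ih =>
    obtain ⟨hC, hCA, hhj⟩ := ih fun x hx => hl x (List.mem_cons_of_mem a hx)
    have ha : 2 ≤ a := hl a List.mem_cons_self
    have hA : (hjTransfer l 0 0 : ℚ) ≠ 0 := by exact_mod_cast (hC.trans_lt hCA).ne'
    rw [hjTransfer_cons_apply_zero_zero, hjTransfer_cons_apply_one_zero, hj, hhj, one_div_div]
    refine ⟨by omega, by nlinarith, ?_⟩
    push_cast
    field_simp

lemma IsWahl.two_le {l : List ℤ} (h : IsWahl l) : ∀ x ∈ l, 2 ≤ x := by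
  induction h with
  | base => simp
  | left l a _ ih =>
    have ha := ih a (by simp)
    intro x hx
    simp only [List.mem_cons, List.mem_append, List.not_mem_nil, or_false] at hx
    rcases hx with rfl | hx | rfl
    · rfl
    · exact ih x (by simp [hx])
    · omega
  | right a l _ ih =>
    have ha := ih a (by simp)
    intro x hx
    simp only [List.mem_cons, List.mem_append, List.not_mem_nil, or_false] at hx
    rcases hx with rfl | hx | rfl
    · omega
    · exact ih x (by simp [hx])
    · rfl

lemma IsWahl.exists_hjTransfer_eq {l : List ℤ} (h : IsWahl l) :
    ∃ m a : ℤ, 0 < a ∧ a < m ∧ IsCoprime a m ∧ hjTransfer l = wahlMatrix m a := by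
  induction h with
  | base =>
    refine ⟨2, 1, one_pos, one_lt_two, isCoprime_one_left, ?_⟩
    simp [hjTransfer, hjMatrix, wahlMatrix]
  | left l a _ ih =>
    obtain ⟨m, k, hk, hkm, hcop, hT⟩ := ih
    refine ⟨2 * m - k, m, by omega, by omega, ?_, ?_⟩
    · have := (hcop.symm.add_mul_left_right (-2)).neg_right
      rwa [show -(k + m * -2) = 2 * m - k by ring] at this
    · rw [← mul_wahlMatrix_mul_eq_wahlMatrix_two_mul_sub, ← hT]
      simp only [hjTransfer_cons, hjTransfer_append, hjTransfer_nil, Matrix.mul_one,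
        hjMatrix_add_one_eq_mul_right, Matrix.mul_assoc]
  | right a l _ ih =>
    obtain ⟨m, k, hk, hkm, hcop, hT⟩ := ih
    refine ⟨m + k, k, hk, by omega, by simpa using hcop.add_mul_left_right 1, ?_⟩
    rw [← mul_wahlMatrix_mul_eq_wahlMatrix_add, ← hT]
    simp only [hjTransfer_cons, hjTransfer_append, hjTransfer_nil, Matrix.mul_one,
      hjMatrix_add_one_eq_mul_left, Matrix.mul_assoc]

/-- Every Wahl continued fraction equals `m²/(ma-1)` for some coprime
integers `0 < a < m`. -/
theorem stmt7 (l : List ℤ) (h : IsWahl l) :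
    ∃ m a : ℤ, 0 < a ∧ a < m ∧ IsCoprime a m ∧
      hj l = (m : ℚ) ^ 2 / ((m : ℚ) * a - 1) := by
  obtain ⟨m, a, ha, ham, hcop, hT⟩ := h.exists_hjTransfer_eq
  obtain ⟨-, -, hhj⟩ := hj_eq_hjTransfer_div h.two_le
  refine ⟨m, a, ha, ham, hcop, ?_⟩
  rw [hhj, hT]
  simp [wahlMatrix]
end

section
/- A sequence {a_1,...,a_r} of positive integers is a zero continued fraction (admissible with value 0) if and only if there exists a triangulation of a convex polygon with vertices P_0, P_1, ..., P_r such that the number of triangles having P_i as a vertex equals a_i for every 1 ≤ i ≤ r. -/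
/-- Partial numerators of a list: `p_0 = 1`, `p_1 = a_1`,
`p_i = a_i p_{i-1} - p_{i-2}`. -/
def pNum (l : List ℤ) : ℕ → ℤ
  | 0 => 1
  | 1 => l.getD 0 0
  | (i + 2) => l.getD (i + 1) 0 * pNum l (i + 1) - pNum l i

/-- A sequence is admissible if its partial numerators `p_i` are positive for
all `i < r`. -/
def admissible (l : List ℤ) : Prop := ∀ i, 1 ≤ i → i < l.length → 0 < pNum l i

/-- `IsTriangulation l T` : `T` is (the set of triangles of) a triangulation of
the convex polygon with vertices listed in convex position by `l`.  Every
triangulation of a convex polygon arises from a triangle by successively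
cutting off "ears". -/
inductive IsTriangulation : List ℕ → Finset (Finset ℕ) → Prop
  | tri (i j k : ℕ) : IsTriangulation [i, j, k] {({i, j, k} : Finset ℕ)}
  | ear (l1 : List ℕ) (x y z : ℕ) (l2 : List ℕ) (T : Finset (Finset ℕ)) :
      IsTriangulation (l1 ++ x :: z :: l2) T →
      IsTriangulation (l1 ++ x :: y :: z :: l2) (insert {x, y, z} T)

namespace ZeroCF

theorem hj_cons (a : ℤ) (l : List ℤ) : hj (a :: l) = a - 1 / hj l := rfl

theorem hj_append_of_hj_eq_zero (s : List ℤ) {t : List ℤ} (ht : hj t = 0) :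
    hj (s ++ t) = hj s := by
  induction s with
  | nil => simpa [hj] using ht
  | cons a s ih => rw [List.cons_append, hj_cons, hj_cons, ih]

def continuant : List ℤ → ℤ
  | [] => 1
  | [a] => a
  | a :: b :: t => a * continuant (b :: t) - continuant t

/-- `[a₁,…,a_r] = K(a₁,…,a_r) / K(a₂,…,a_r)`; because of the junk value `1 / 0 = 0` this
can only fail through a vanishing inner fraction. -/
theorem continuant_eq_mul_hj : ∀ {l : List ℤ}, l ≠ [] →
    (∀ t, t <:+ l.tail → t ≠ [] → hj t ≠ 0) →
    (continuant l : ℚ) = continuant l.tail * hj l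
  | [], hne, _ => absurd rfl hne
  | [a], _, _ => by simp [continuant, hj]
  | a :: b :: t, _, h => by
    have hb : hj (b :: t) ≠ 0 := h _ List.suffix_rfl (List.cons_ne_nil b t)
    have ih := continuant_eq_mul_hj (List.cons_ne_nil b t)
      fun u hu => h u (hu.trans (List.suffix_cons b t))
    simp only [List.tail_cons] at ih ⊢
    rw [hj_cons, continuant, Int.cast_sub, Int.cast_mul, ih]
    field_simp

theorem hj_pos_of_continuant_pos {t : List ℤ} (h : ∀ u, u <:+ t → 0 < continuant u) :
    ∀ u, u <:+ t → u ≠ [] → 0 < hj u := by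
  induction t with
  | nil => exact fun u hu hne => absurd (List.suffix_nil.mp hu) hne
  | cons c t ih =>
    have ih := ih fun u hu => h u (hu.trans (List.suffix_cons c t))
    intro u hu hne
    rcases List.suffix_cons_iff.mp hu with rfl | hu
    · have hK : (0 : ℚ) < continuant (c :: t) := by exact_mod_cast h _ List.suffix_rfl
      have hK' : (0 : ℚ) < continuant t := by exact_mod_cast h _ (List.suffix_cons c t)
      rw [continuant_eq_mul_hj (List.cons_ne_nil c t) fun u hu hne => (ih u hu hne).ne'] at hK
      exact pos_of_mul_pos_right hK hK'.le
    · exact ih u hu hne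

/-- One step of the recurrence `p_i = a_i p_{i-1} - p_{i-2}`, on states `(p_{i-1}, p_{i-2})`. -/
def step (a : ℤ) (v : ℤ × ℤ) : ℤ × ℤ := (a * v.1 - v.2, v.1)

def run (l : List ℤ) (v : ℤ × ℤ) : ℤ × ℤ := l.foldl (fun w a => step a w) v

@[simp] theorem run_nil (v : ℤ × ℤ) : run [] v = v := rfl

@[simp] theorem run_cons (a : ℤ) (l : List ℤ) (v : ℤ × ℤ) :
    run (a :: l) v = run l (step a v) :=
  rfl

theorem run_append (s t : List ℤ) (v : ℤ × ℤ) : run (s ++ t) v = run t (run s v) :=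
  List.foldl_append

def IsZeroRun : List ℤ → ℤ × ℤ → Prop
  | [], _ => False
  | [a], v => (step a v).1 = 0
  | a :: b :: t, v => 0 < (step a v).1 ∧ IsZeroRun (b :: t) (step a v)

theorem isZeroRun_cons {a : ℤ} {t : List ℤ} (ht : t ≠ []) {v : ℤ × ℤ} :
    IsZeroRun (a :: t) v ↔ 0 < (step a v).1 ∧ IsZeroRun t (step a v) := by
  cases t with
  | nil => exact absurd rfl ht
  | cons b t => rfl

theorem run_fst_cons (a : ℤ) (t : List ℤ) (v : ℤ × ℤ) :
    (run (a :: t) v).1 = v.1 * continuant (a :: t) - v.2 * continuant t := by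
  induction t generalizing a v with
  | nil => simp [step, continuant, mul_comm]
  | cons b t ih =>
    rw [run_cons, ih, continuant]
    simp only [step]
    ring

theorem run_one_zero_fst (l : List ℤ) : (run l (1, 0)).1 = continuant l := by
  cases l with
  | nil => rfl
  | cons a t => rw [run_fst_cons]; simp

theorem isZeroRun_iff {l : List ℤ} {v : ℤ × ℤ} : IsZeroRun l v ↔
    l ≠ [] ∧ (∀ i < l.length - 1, 0 < (run (l.take (i + 1)) v).1) ∧ (run l v).1 = 0 := by
  induction l generalizing v with
  | nil => simp [IsZeroRun]
  | cons a t ih =>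
    cases t with
    | nil => simp [IsZeroRun]
    | cons b t =>
      rw [isZeroRun_cons (List.cons_ne_nil b t), ih]
      simp only [List.length_cons, Nat.add_sub_cancel, Nat.forall_lt_succ_left, List.take_succ_cons,
        run_cons, List.take_zero, run_nil, ne_eq, reduceCtorEq, not_false_eq_true, true_and]
      tauto

theorem IsZeroRun.run_fst {l : List ℤ} {v : ℤ × ℤ} (h : IsZeroRun l v) : (run l v).1 = 0 :=
  (isZeroRun_iff.mp h).2.2

theorem run_take_succ (l : List ℤ) :
    ∀ i < l.length, run (l.take (i + 1)) (1, 0) = (pNum l (i + 1), pNum l i) := by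
  intro i
  induction i with
  | zero =>
    intro hi
    obtain ⟨a, t, rfl⟩ := List.exists_cons_of_length_pos hi
    simp [pNum, step]
  | succ i ih =>
    intro hi
    rw [List.take_add_one, List.getElem?_eq_getElem hi, Option.toList_some, run_append,
      ih (by omega)]
    simp [step, pNum, List.getElem?_eq_getElem hi]

theorem pNum_eq_continuant_take (l : List ℤ) {i : ℕ} (hi : i ≤ l.length) :
    pNum l i = continuant (l.take i) := by
  cases i with
  | zero => rfl
  | succ i => rw [← run_one_zero_fst, run_take_succ l i (by omega)]

theorem pNum_append_of_le {s t : List ℤ} {i : ℕ} (hi : i ≤ s.length) :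
    pNum (s ++ t) i = pNum s i := by
  rw [pNum_eq_continuant_take _ (by simp; omega), pNum_eq_continuant_take _ hi,
    List.take_append_of_le_length hi]

theorem isZeroRun_one_zero_iff {l : List ℤ} :
    IsZeroRun l (1, 0) ↔ admissible l ∧ pNum l l.length = 0 := by
  simp only [isZeroRun_iff, run_one_zero_fst, admissible]
  rw [pNum_eq_continuant_take l le_rfl, List.take_length]
  constructor
  · rintro ⟨-, hpos, h0⟩
    refine ⟨fun i h1 h2 => ?_, h0⟩
    obtain ⟨j, rfl⟩ := Nat.exists_eq_add_of_le' h1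
    rw [pNum_eq_continuant_take l h2.le]
    exact hpos j (by omega)
  · rintro ⟨hadm, h0⟩
    refine ⟨?_, fun i hi => ?_, h0⟩
    · rintro rfl
      simp [continuant] at h0
    · rw [← pNum_eq_continuant_take l (by omega)]
      exact hadm (i + 1) (by omega) (by omega)

theorem IsZeroRun.continuant_pos :
    ∀ {l : List ℤ} {v : ℤ × ℤ}, IsZeroRun l v → 0 < v.1 →
      ∀ t, t <:+ l.tail → 0 < continuant t
  | [], _, h, _ => h.elim
  | [_], _, _, _ => fun t ht => by simp_all [continuant]
  | a :: b :: t, v, h, hv => by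
    obtain ⟨hstep, h⟩ := (isZeroRun_cons (List.cons_ne_nil b t)).mp h
    have ih := h.continuant_pos hstep
    have ht : 0 < continuant t := ih t List.suffix_rfl
    have hbt : 0 < continuant (b :: t) := by
      have := h.run_fst
      rw [run_fst_cons] at this
      exact pos_of_mul_pos_right (show 0 < (step a v).1 * continuant (b :: t) by
        simp only [step] at this ⊢; nlinarith) hstep.le
    intro u hu
    rcases List.suffix_cons_iff.mp hu with rfl | hu
    · exact hbt
    · exact ih u hu

theorem hj_eq_zero_of_isZeroRun {l : List ℤ} (h : IsZeroRun l (1, 0)) : hj l = 0 := by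
  have hne : l ≠ [] := by rintro rfl; exact h
  have hpos := h.continuant_pos one_pos
  have hK := continuant_eq_mul_hj hne fun t ht hne => (hj_pos_of_continuant_pos hpos t ht hne).ne'
  rw [← run_one_zero_fst, h.run_fst, Int.cast_zero, eq_comm, mul_eq_zero] at hK
  exact hK.resolve_left (by exact_mod_cast (hpos _ List.suffix_rfl).ne')

/-- If some inner fraction of `l = s ++ t` vanishes, the junk value `1 / 0 = 0` makes
`hj l = hj s`; admissibility then rules this out by induction. -/
theorem pNum_length_eq_zero {l : List ℤ} (hne : l ≠ []) (hadm : admissible l) (hhj : hj l = 0) :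
    pNum l l.length = 0 := by
  by_cases hjunk : ∃ t, t <:+ l.tail ∧ t ≠ [] ∧ hj t = 0
  · obtain ⟨t, ⟨s', hs'⟩, htne, ht⟩ := hjunk
    obtain ⟨a, l', rfl⟩ := List.exists_cons_of_ne_nil hne
    set s := a :: s'
    have hl : a :: l' = s ++ t := by rw [List.tail_cons] at hs'; simp [s, hs']
    have hlen : s.length < (a :: l').length := by
      rw [hl, List.length_append, Nat.lt_add_right_iff_pos]; exact List.length_pos_iff.mpr htne
    have hs : pNum s s.length = 0 := by
      refine pNum_length_eq_zero (List.cons_ne_nil a s') (fun i h1 h2 => ?_) ?_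
      · rw [← pNum_append_of_le (t := t) h2.le, ← hl]; exact hadm i h1 (by omega)
      · rwa [← hj_append_of_hj_eq_zero s ht, ← hl]
    have := hadm s.length (by simp [s]) hlen
    rw [hl, pNum_append_of_le le_rfl, hs] at this
    exact (lt_irrefl 0 this).elim
  · push Not at hjunk
    have hK := continuant_eq_mul_hj hne hjunk
    rw [hhj, mul_zero, Int.cast_eq_zero] at hK
    rw [pNum_eq_continuant_take l le_rfl, List.take_length, hK]
termination_by l.length

theorem admissible_and_hj_eq_zero_iff {l : List ℤ} (hne : l ≠ []) :
    admissible l ∧ hj l = 0 ↔ IsZeroRun l (1, 0) := by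
  rw [isZeroRun_one_zero_iff]
  exact ⟨fun h => ⟨h.1, pNum_length_eq_zero hne h.1 h.2⟩,
    fun h => ⟨h.1, hj_eq_zero_of_isZeroRun (isZeroRun_one_zero_iff.mpr h)⟩⟩

/-- Started from `(0, -1)`, the first entry is irrelevant; it stands for the vertex `P₀`. -/
theorem isZeroRun_cons_zero_neg_one {c : ℤ} {l : List ℤ} :
    IsZeroRun (c :: l) (0, -1) ↔ IsZeroRun l (1, 0) := by
  cases l with
  | nil => simp [IsZeroRun, step]
  | cons b t => simp [isZeroRun_cons, step]

theorem isZeroRun_cons_congr {a b : ℤ} {t : List ℤ} {v w : ℤ × ℤ}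
    (h : step a v = step b w) :
    IsZeroRun (a :: t) v ↔ IsZeroRun (b :: t) w := by
  cases t <;> simp only [IsZeroRun, h]

/-- The matrices `M(x) = !![x, -1; 1, 0]` of the recurrence satisfy
`M(a + 1) M(1) M(b + 1) = M(a) M(b)`. -/
theorem isZeroRun_blowup {a b : ℤ} {t : List ℤ} {v : ℤ × ℤ} (hv : 0 ≤ v.1) :
    IsZeroRun ((a + 1) :: 1 :: (b + 1) :: t) v ↔ IsZeroRun (a :: b :: t) v := by
  have hstep : step (b + 1) (step 1 (step (a + 1) v)) = step b (step a v) := by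
    simp only [step, Prod.mk.injEq]; constructor <;> ring
  have h1 : (step (a + 1) v).1 = (step a v).1 + v.1 := by simp only [step]; ring
  have h2 : (step 1 (step (a + 1) v)).1 = (step a v).1 := by simp only [step]; ring
  rw [isZeroRun_cons (t := 1 :: (b + 1) :: t) (by simp),
    isZeroRun_cons (t := (b + 1) :: t) (by simp), isZeroRun_cons_congr hstep,
    isZeroRun_cons (t := b :: t) (by simp), h1, h2]
  constructor
  · rintro ⟨-, h1, h2⟩; exact ⟨by linarith, h2⟩
  · rintro ⟨h1, h2⟩; exact ⟨by linarith, by linarith, h2⟩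

theorem isZeroRun_append_blowup {a b : ℤ} {t : List ℤ} (s : List ℤ) {v : ℤ × ℤ}
    (hv : 0 ≤ v.1) :
    IsZeroRun (s ++ (a + 1) :: 1 :: (b + 1) :: t) v ↔ IsZeroRun (s ++ a :: b :: t) v := by
  induction s generalizing v with
  | nil => exact isZeroRun_blowup hv
  | cons c s ih =>
    simp only [List.cons_append]
    rw [isZeroRun_cons (by simp), isZeroRun_cons (by simp)]
    exact and_congr_right fun h => ih h.le

/-- Along a run with entries `≥ 2` the state keeps `0 ≤ y < x`, so the run can only end after
an entry `1`; the first such entry is followed by an entry `≥ 2` unless the run is `[1, 1]`. -/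
theorem IsZeroRun.exists_eq_append_one : ∀ {l : List ℤ} {x y : ℤ}, IsZeroRun l (x, y) →
    (∀ a ∈ l, 0 < a) → 0 ≤ y → y < x →
    (y = 0 ∧ l = [1, 1]) ∨
      ∃ s c t, l = s ++ 1 :: c :: t ∧ (∀ e ∈ s, 2 ≤ e) ∧ 2 ≤ c
  | [], _, _, h, _, _, _ => h.elim
  | [a], x, y, h, hpos, hy, hyx => by
    have ha := hpos a (by simp)
    simp only [IsZeroRun, step] at h
    nlinarith
  | a :: b :: t, x, y, h, hpos, hy, hyx => by
    obtain ⟨hstep, h⟩ := (isZeroRun_cons (List.cons_ne_nil b t)).mp h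
    simp only [step] at hstep h
    have ha := hpos a (by simp)
    have hb := hpos b (by simp)
    rcases (by omega : a = 1 ∨ 2 ≤ a) with rfl | ha2
    · rcases (by omega : b = 1 ∨ 2 ≤ b) with rfl | hb2
      · cases t with
        | nil =>
          simp only [IsZeroRun, step] at h
          left; exact ⟨by linarith, rfl⟩
        | cons c t =>
          simp only [isZeroRun_cons (List.cons_ne_nil c t), step] at h
          linarith [h.1]
      · exact Or.inr ⟨[], b, t, rfl, by simp, hb2⟩
    · have hx : x < a * x - y := by nlinarith
      rcases h.exists_eq_append_one (fun e he => hpos e (List.mem_cons_of_mem a he)) (by omega) hx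
        with ⟨hx0, -⟩ | ⟨s, c, t', heq, hs, hc⟩
      · omega
      · exact Or.inr ⟨a :: s, c, t', by rw [heq]; rfl, by simpa [ha2] using hs, hc⟩

theorem exists_blowdown {a₀ : ℤ} {l : List ℤ} (h : IsZeroRun (a₀ :: l) (0, -1))
    (hpos : ∀ a ∈ l, 0 < a) :
    l = [1, 1] ∨ ∃ s a b t, a₀ :: l = s ++ (a + 1) :: 1 :: (b + 1) :: t ∧
      ∀ e ∈ (s ++ a :: b :: t).tail, 0 < e := by
  rcases (isZeroRun_cons_zero_neg_one.mp h).exists_eq_append_one hpos le_rfl one_pos with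
    ⟨-, rfl⟩ | ⟨s, c, t, rfl, hs, hc⟩
  · exact Or.inl rfl
  right
  have ht : ∀ e ∈ t, 0 < e := fun e he => hpos e (by simp [he])
  rcases List.eq_nil_or_concat s with rfl | ⟨s, e, rfl⟩
  · refine ⟨[], a₀ - 1, c - 1, t, by simp, ?_⟩
    simp only [List.nil_append, List.tail_cons, List.mem_cons]
    rintro x (rfl | hx)
    exacts [by omega, ht x hx]
  · simp only [List.concat_eq_append] at hs ⊢
    refine ⟨a₀ :: s, e - 1, c - 1, t, by simp, ?_⟩
    simp only [List.cons_append, List.tail_cons, List.mem_append, List.mem_cons]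
    have he := hs e (by simp)
    rintro x (hx | rfl | rfl | hx)
    exacts [by linarith [hs x (by simp [hx])], by omega, by omega, ht x hx]

end ZeroCF

open ZeroCF

def triangleCount (T : Finset (Finset ℕ)) (v : ℕ) : ℤ :=
  ((T.filter (fun t => v ∈ t)).card : ℤ)

theorem triangleCount_insert {T : Finset (Finset ℕ)} {s : Finset ℕ} (hs : s ∉ T) (v : ℕ) :
    triangleCount (insert s T) v = triangleCount T v + if v ∈ s then 1 else 0 := by
  unfold triangleCount
  rw [Finset.filter_insert]
  split_ifs
  · rw [Finset.card_insert_of_notMem fun h => hs (Finset.mem_of_mem_filter s h)]; push_cast; rfl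
  · simp

theorem triangleCount_image {f : ℕ → ℕ} (hf : f.Injective) (T : Finset (Finset ℕ))
    (v : ℕ) :
    triangleCount (T.image (Finset.image f)) (f v) = triangleCount T v := by
  unfold triangleCount
  rw [Finset.filter_image, Finset.card_image_of_injective _ (Finset.image_injective hf)]
  simp [Finset.mem_image, hf.eq_iff]

namespace IsTriangulation

theorem mem_of_mem {L : List ℕ} {T : Finset (Finset ℕ)} (h : IsTriangulation L T)
    {t : Finset ℕ} (ht : t ∈ T) {v : ℕ} (hv : v ∈ t) : v ∈ L := by
  induction h with
  | tri i j k =>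
    simp only [Finset.mem_singleton] at ht
    subst ht
    simpa using hv
  | ear l1 x y z l2 T _ ih =>
    rcases Finset.mem_insert.mp ht with rfl | ht
    · simp only [Finset.mem_insert, Finset.mem_singleton] at hv
      rcases hv with rfl | rfl | rfl <;> simp
    · have := ih ht
      simp only [List.mem_append, List.mem_cons] at this ⊢
      tauto

theorem map (f : ℕ → ℕ) {L : List ℕ} {T : Finset (Finset ℕ)} (h : IsTriangulation L T) :
    IsTriangulation (L.map f) (T.image (Finset.image f)) := by
  induction h with
  | tri i j k => simpa [Finset.image_insert] using tri (f i) (f j) (f k)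
  | ear l1 x y z l2 T _ ih =>
    simpa [Finset.image_insert] using
      ear (l1.map f) (f x) (f y) (f z) (l2.map f) _ (by simpa using ih)

end IsTriangulation

theorem map_triangleCount_ear {l1 l2 : List ℕ} {x y z : ℕ} {T : Finset (Finset ℕ)}
    (hnd : (l1 ++ x :: y :: z :: l2).Nodup) (hy : ∀ t ∈ T, y ∉ t) :
    (l1 ++ x :: y :: z :: l2).map (triangleCount (insert {x, y, z} T)) =
      l1.map (triangleCount T) ++
        (triangleCount T x + 1) :: 1 :: (triangleCount T z + 1) :: l2.map (triangleCount T) := by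
  have hs : ({x, y, z} : Finset ℕ) ∉ T := fun h => hy _ h (by simp)
  have hy0 : triangleCount T y = 0 := by
    simpa [triangleCount, Finset.filter_eq_empty_iff] using hy
  simp only [List.nodup_append, List.nodup_cons, List.mem_cons] at hnd
  have hout : ∀ v ∈ l1 ++ l2, triangleCount (insert {x, y, z} T) v = triangleCount T v := by
    intro v hv
    rw [triangleCount_insert hs, if_neg, add_zero]
    simp only [Finset.mem_insert, Finset.mem_singleton]
    rcases List.mem_append.mp hv with hv | hv
    · exact fun h => hnd.2.2 v hv v (by tauto) rfl
    · rintro (rfl | rfl | rfl) <;> tauto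
  simp only [List.map_append, List.map_cons, triangleCount_insert hs, hy0]
  simp only [Finset.mem_insert, Finset.mem_singleton, true_or, or_true, if_true]
  rw [List.map_congr_left fun v hv => hout v (List.mem_append_left l2 hv),
    List.map_congr_left fun v hv => hout v (List.mem_append_right l1 hv)]
  simp

theorem IsTriangulation.isZeroRun {L : List ℕ} {T : Finset (Finset ℕ)} (h : IsTriangulation L T)
    (hnd : L.Nodup) : IsZeroRun (L.map (triangleCount T)) (0, -1) := by
  induction h with
  | tri i j k =>
    have hcount : ∀ v ∈ ({i, j, k} : Finset ℕ), triangleCount {{i, j, k}} v = 1 := by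
      intro v hv; simp [triangleCount, Finset.filter_singleton, hv]
    simp [hcount, IsZeroRun, step]
  | ear l1 x y z l2 T hT ih =>
    have hnd' : (l1 ++ x :: z :: l2).Nodup :=
      hnd.sublist ((List.sublist_cons_self y _).cons_cons x |>.append_left l1)
    have hy : ∀ t ∈ T, y ∉ t := fun t ht hyt => by
      have := hT.mem_of_mem ht hyt
      simp only [List.nodup_append, List.nodup_cons, List.mem_cons, List.mem_append] at hnd this
      rcases this with h | rfl | rfl | h
      · exact hnd.2.2 y h y (by simp) rfl
      all_goals tauto
    rw [map_triangleCount_ear hnd hy, isZeroRun_append_blowup _ le_rfl]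
    simpa using ih hnd'

theorem range_add_three_eq (p r : ℕ) : List.range (p + 2 + r + 1) =
    List.range p ++ p :: (p + 1) :: (p + 2) :: (List.range r).map (· + (p + 3)) := by
  rw [show p + 2 + r + 1 = p + (3 + r) by omega, List.range_add, List.range_add]
  simp [List.range_succ_eq_map, Function.comp_def]
  intros; omega

theorem map_range_skip_eq (p r : ℕ) :
    (List.range (p + 2 + r)).map (fun k => if k ≤ p then k else k + 1) =
      List.range p ++ p :: (p + 2) :: (List.range r).map (· + (p + 3)) := by
  rw [show p + 2 + r = p + (2 + r) by omega, List.range_add, List.range_add]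
  simp only [List.map_append, List.map_map]
  congr 1
  · exact (List.map_congr_left fun k hk => if_pos (by simp at hk; omega)).trans (List.map_id' _)
  · simp [List.range_succ_eq_map, Function.comp_def]; intros; omega

theorem IsTriangulation.exists_insert_ear {n : ℕ} {T' : Finset (Finset ℕ)}
    (hT' : IsTriangulation (List.range n) T') {P R : List ℤ} {x z : ℤ}
    (hD : (List.range n).map (triangleCount T') = P ++ x :: z :: R) :
    ∃ T, IsTriangulation (List.range (n + 1)) T ∧
      (List.range (n + 1)).map (triangleCount T) = P ++ (x + 1) :: 1 :: (z + 1) :: R := by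
  set p := P.length
  obtain rfl : n = p + 2 + R.length := by
    have := congrArg List.length hD
    simp at this; omega
  set f : ℕ → ℕ := fun k => if k ≤ p then k else k + 1
  have hf : f.Injective := fun a b => by simp only [f]; split_ifs <;> omega
  have hrange := range_add_three_eq p R.length
  have hmap : (List.range (p + 2 + R.length)).map f = _ := map_range_skip_eq p R.length
  have hfresh : ∀ t ∈ T'.image (Finset.image f), p + 1 ∉ t := by
    intro t ht hmem
    obtain ⟨t, -, rfl⟩ := Finset.mem_image.mp ht
    obtain ⟨k, -, hk⟩ := Finset.mem_image.mp hmem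
    simp only [f] at hk; split_ifs at hk <;> omega
  have hT'' := hT'.map f
  rw [hmap] at hT''
  refine ⟨_, hrange ▸ IsTriangulation.ear _ _ _ _ _ _ hT'', ?_⟩
  have hnd := hrange ▸ List.nodup_range
  rw [hrange, map_triangleCount_ear hnd hfresh]
  have hD' : ((List.range (p + 2 + R.length)).map f).map
      (triangleCount (T'.image (Finset.image f))) = P ++ x :: z :: R := by
    rw [List.map_map, ← hD]
    exact List.map_congr_left fun v _ => triangleCount_image hf T' v
  rw [hmap, List.map_append, List.map_cons, List.map_cons] at hD'
  obtain ⟨h1, h2⟩ := List.append_inj hD' (by simp [p])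
  simp only [List.cons.injEq] at h2
  rw [h1, h2.1, h2.2.1, h2.2.2]

theorem exists_eq_append_of_tail_eq {D s t : List ℤ} {a b : ℤ}
    (h : D.tail = (s ++ a :: b :: t).tail) :
    ∃ P x, D = P ++ x :: b :: t ∧
      (P ++ (x + 1) :: 1 :: (b + 1) :: t).tail = (s ++ (a + 1) :: 1 :: (b + 1) :: t).tail := by
  obtain ⟨c, D, rfl⟩ : ∃ c D', D = c :: D' :=
    List.exists_cons_of_ne_nil (by rintro rfl; cases s <;> simp at h)
  cases s with
  | nil => exact ⟨[], c, by simpa using h, rfl⟩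
  | cons e s => exact ⟨c :: s, a, by simpa using h, rfl⟩

theorem exists_triangulation_of_isZeroRun (L : List ℤ) (hL : IsZeroRun L (0, -1))
    (hpos : ∀ a ∈ L.tail, 0 < a) : ∃ T, IsTriangulation (List.range L.length) T ∧
      ((List.range L.length).map (triangleCount T)).tail = L.tail := by
  obtain ⟨a₀, l, rfl⟩ := List.exists_cons_of_ne_nil (show L ≠ [] by rintro rfl; exact hL)
  rcases exists_blowdown hL hpos with rfl | ⟨s, a, b, t, hst, hpos'⟩
  · exact ⟨{{0, 1, 2}}, .tri 0 1 2, by rfl⟩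
  have hL' : IsZeroRun (s ++ a :: b :: t) (0, -1) :=
    (isZeroRun_append_blowup s le_rfl).mp (hst ▸ hL)
  have hlen : (s ++ a :: b :: t).length + 1 = (a₀ :: l).length := by rw [hst]; simp; omega
  obtain ⟨T', hT', hD'⟩ := exists_triangulation_of_isZeroRun _ hL' hpos'
  obtain ⟨P, x, hP, htail⟩ := exists_eq_append_of_tail_eq hD'
  obtain ⟨T, hT, hD⟩ := hT'.exists_insert_ear hP
  exact ⟨T, hlen ▸ hT, by rw [← hlen, hD, htail, hst]⟩
termination_by L.length
decreasing_by subst_vars; rw [← hlen]; omega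

/-- A sequence `a_1,...,a_r` of positive integers is a zero continued fraction
iff there is a triangulation of a convex polygon `P_0 P_1 ⋯ P_r` such that the
number of triangles having `P_i` as a vertex equals `a_i` for `1 ≤ i ≤ r`. -/
theorem stmt8 (l : List ℤ) (hne : l ≠ []) (hpos : ∀ a ∈ l, 0 < a) :
    (admissible l ∧ hj l = 0) ↔
      ∃ T : Finset (Finset ℕ), IsTriangulation (List.range (l.length + 1)) T ∧
        ∀ i : ℕ, (h : i < l.length) →
          ((T.filter (fun t => i + 1 ∈ t)).card : ℤ) = l.get ⟨i, h⟩ := by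
  have hcounts (T : Finset (Finset ℕ)) :
      (∀ i (h : i < l.length),
          ((T.filter (fun t => i + 1 ∈ t)).card : ℤ) = l.get ⟨i, h⟩) ↔
        (List.range (l.length + 1)).map (triangleCount T) = triangleCount T 0 :: l := by
    rw [List.range_succ_eq_map, List.map_cons, List.cons.injEq]
    simp [List.ext_getElem_iff, triangleCount]
  rw [admissible_and_hj_eq_zero_iff hne]
  constructor
  · intro h
    obtain ⟨T, hT, hD⟩ :=
      exists_triangulation_of_isZeroRun (0 :: l) (isZeroRun_cons_zero_neg_one.mpr h) hpos
    refine ⟨T, hT, (hcounts T).mpr ?_⟩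
    simpa [List.range_succ_eq_map] using hD
  · rintro ⟨T, hT, hc⟩
    have h := hT.isZeroRun List.nodup_range
    rwa [(hcounts T).mp hc, isZeroRun_cons_zero_neg_one] at h
end

section
/- Let [b_1,...,b_t] be a Wahl continued fraction with t ≥ 2, b_t = 2, and b_2 = b_3 = ... = b_t = 2 (so the chain is [b_1, 2,...,2]). Then b_1 = t + 3, and the discrepancies satisfy m_1 = -1 + 1/(b_1-2) and m_t = -1/(b_1-2), where the discrepancy m_i = -1 + δ_i/(δ_1+δ_t) and the δ_i are defined inductively via the Wahl construction (δ_1 = 1 for [4]; under [a_1,...,a_r] ↦ [a_1+1,...,a_r,2] the new sequence is δ_1,...,δ_r, δ_1+δ_r, and under [a_1,...,a_r] ↦ [2,a_1,...,a_r+1] it is δ_1+δ_r, δ_1,...,δ_r). -/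
/-- `WahlD l d` : `l` is a Wahl continued fraction and `d` is its associated
sequence `δ_1,...,δ_r`.  For `[4]` the sequence is `(1)`; under
`[a_1,...,a_r] ↦ [2, a_1,...,a_r+1]` the sequence becomes
`(δ_1+δ_r, δ_1,...,δ_r)`, and under `[a_1,...,a_r] ↦ [a_1+1,...,a_r, 2]` it
becomes `(δ_1,...,δ_r, δ_1+δ_r)`. -/
inductive WahlD : List ℤ → List ℤ → Prop
  | base : WahlD [4] [1]
  | left (l : List ℤ) (a : ℤ) (d : List ℤ) (e : ℤ) :
      WahlD (l ++ [a]) (d ++ [e]) →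
      WahlD (2 :: (l ++ [a + 1])) (((d ++ [e]).headD 0 + e) :: (d ++ [e]))
  | right (a : ℤ) (l : List ℤ) (e : ℤ) (d : List ℤ) :
      WahlD (a :: l) (e :: d) →
      WahlD ((a + 1) :: (l ++ [2])) ((e :: d) ++ [e + (e :: d).getLastD 0])

/-!
Only the operation `[a_1,…,a_r] ↦ [a_1+1,…,a_r,2]` can produce a chain ending in `2`, since the
other one ends in `a_r + 1 ≥ 3`. So `[b, 2,…,2]` with `n` twos arises from `[4]` by `n` such
steps: `b = n + 4`, `δ_1` stays `1`, and each step raises `δ_r` by one, so `δ_r = n + 1`.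
-/

theorem List.eq_replicate_of_append_singleton_eq_replicate {α : Type*} {l : List α} {x : α}
    {n : ℕ} (h : l ++ [x] = List.replicate n x) :
    ∃ m, n = m + 1 ∧ l = List.replicate m x := by
  obtain _ | m := n
  · simp at h
  · exact ⟨m, rfl, List.append_inj_left' (h.trans (List.replicate_succ' ..)) rfl⟩

namespace WahlD

theorem two_le_of_mem {L d : List ℤ} (h : WahlD L d) : ∀ x ∈ L, 2 ≤ x := by
  induction h with
  | base => simp
  | left l a d e _ ih =>
    have ha := ih a (by simp)
    simp only [List.mem_cons, List.mem_append, List.not_mem_nil, or_false]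
    rintro x (rfl | hx | rfl)
    · exact le_rfl
    · exact ih x (by simp [hx])
    · omega
  | right a l e d _ ih =>
    have ha := ih a (by simp)
    simp only [List.mem_cons, List.mem_append, List.not_mem_nil, or_false]
    rintro x (rfl | hx | rfl)
    · omega
    · exact ih x (by simp [hx])
    · exact le_rfl

theorem of_cons_replicate_two {b : ℤ} {n : ℕ} {d : List ℤ}
    (h : WahlD (b :: List.replicate n 2) d) :
    b = n + 4 ∧ d.headD 0 = 1 ∧ d.getLastD 0 = n + 1 := by
  generalize hL : b :: List.replicate n 2 = L at h
  induction h generalizing b n with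
  | base =>
    obtain ⟨rfl, hn⟩ := List.cons_eq_cons.mp hL
    obtain rfl : n = 0 := by simpa using hn
    simp
  | left l a d e h _ =>
    have hmem : a + 1 ∈ List.replicate n 2 := by
      rw [(List.cons_eq_cons.mp hL).2]; simp
    have ha : a + 1 = 2 := List.eq_of_mem_replicate hmem
    have := h.two_le_of_mem a (by simp)
    omega
  | right a l e d _ ih =>
    obtain ⟨rfl, hl⟩ := List.cons_eq_cons.mp hL
    obtain ⟨m, rfl, rfl⟩ := List.eq_replicate_of_append_singleton_eq_replicate hl.symm
    obtain ⟨rfl, he, hlast⟩ := ih rfl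
    simp only [List.headD_cons] at he
    subst he
    refine ⟨by push_cast; ring, rfl, ?_⟩
    simp only [List.getLastD_concat, hlast]
    push_cast
    ring

end WahlD

/-- For the Wahl chain `[b_1, 2,...,2]` of length `t ≥ 2` (so `b_t = 2` and
`b_2 = ⋯ = b_t = 2`) one has `b_1 = t + 3`, and the discrepancies
`m_i = -1 + δ_i/(δ_1+δ_t)` at the two ends satisfy `m_1 = -1 + 1/(b_1-2)` and
`m_t = -1/(b_1-2)`. -/
theorem stmt15 (b1 : ℤ) (t : ℕ) (d : List ℤ) (ht : 2 ≤ t)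
    (h : WahlD (b1 :: List.replicate (t - 1) 2) d) :
    b1 = (t : ℤ) + 3 ∧
    -1 + (d.headD 0 : ℚ) / ((d.headD 0 : ℚ) + (d.getLastD 0 : ℚ)) =
      -1 + 1 / ((b1 : ℚ) - 2) ∧
    -1 + (d.getLastD 0 : ℚ) / ((d.headD 0 : ℚ) + (d.getLastD 0 : ℚ)) =
      -(1 / ((b1 : ℚ) - 2)) := by
  obtain ⟨hb, hhead, hlast⟩ := h.of_cons_replicate_two
  have hb' : b1 = t + 3 := by omega
  have hlast' : d.getLastD 0 = t := by omega
  have hden : ((t + 3 : ℤ) : ℚ) - 2 = 1 + t := by push_cast; ring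
  refine ⟨hb', ?_, ?_⟩ <;> rw [hhead, hlast', hb', hden] <;> push_cast
  · ring
  · field_simp
    ring
end

section
/- Let [b_1,...,b_t] be a Wahl continued fraction with t ≥ 2 and b_t = 2, such that not all of b_2,...,b_t equal 2. Write m_1 = -1 + δ_1/(δ_1+δ_t) and m_t = -1 + δ_t/(δ_1+δ_t) for its discrepancies. Then m_1 = -1 + μ and m_t = -μ for some rational μ with 1/b_1 < μ < 1/(b_1-1). -/
/-!
Write `b` for the first entry of the Wahl continued fraction and `δ₁`, `δₜ` for the
extreme entries of its `δ`-sequence. Both operations preserve the inequalities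
`(b - 2) δ₁ - 1 ≤ δₜ < (b - 1) δ₁`, and the lower bound is an equality only as long as
all entries after the first are `2`. With `μ = δ₁ / (δ₁ + δₜ)`, the bounds
`1/b < μ < 1/(b-1)` are exactly `(b - 2) δ₁ < δₜ < (b - 1) δ₁`.
-/

@[simp]
lemma List.getLastD_cons_append_singleton {α : Type*} (a b x : α) (l : List α) :
    (a :: (l ++ [b])).getLastD x = b := by
  rw [← List.cons_append, List.getLastD_concat]

namespace WahlD

variable {l d : List ℤ}

lemma one_le_headD_and_getLastD (h : WahlD l d) : 1 ≤ d.headD 0 ∧ 1 ≤ d.getLastD 0 := by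
  induction h with
  | base => norm_num
  | left L a D e _ ih =>
    simp only [List.getLastD_concat, List.headD_cons, List.getLastD_cons_append_singleton] at ih ⊢
    omega
  | right a L e D _ ih =>
    simp only [List.cons_append, List.headD_cons, List.getLastD_cons_append_singleton] at ih ⊢
    omega

lemma getLastD_lt (h : WahlD l d) : d.getLastD 0 < (l.headD 0 - 1) * d.headD 0 := by
  induction h with
  | base => norm_num
  | left L a D e hprev _ =>
    have := hprev.one_le_headD_and_getLastD
    simp only [List.getLastD_concat, List.headD_cons, List.getLastD_cons_append_singleton] at this ⊢
    omega
  | right a L e D _ ih =>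
    simp only [List.cons_append, List.headD_cons, List.getLastD_cons_append_singleton] at ih ⊢
    nlinarith

lemma getLastD_eq_or_lt (h : WahlD l d) :
    ((∀ x ∈ l.tail, x = 2) ∧ d.getLastD 0 = (l.headD 0 - 2) * d.headD 0 - 1) ∨
      (l.headD 0 - 2) * d.headD 0 < d.getLastD 0 := by
  induction h with
  | base => norm_num
  | left L a D e hprev _ =>
    have := hprev.one_le_headD_and_getLastD
    simp only [List.getLastD_concat, List.headD_cons, List.getLastD_cons_append_singleton] at this ⊢
    omega
  | right a L e D _ ih =>
    simp only [List.cons_append, List.headD_cons, List.getLastD_cons_append_singleton,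
      List.tail_cons, List.mem_append, List.mem_singleton] at ih ⊢
    rcases ih with ⟨htail, heq⟩ | hlt
    · exact Or.inl ⟨fun x hx => hx.elim (htail x) id, by linarith⟩
    · exact Or.inr (by linarith)

end WahlD

lemma one_div_lt_div_add_lt_one_div_sub_one {K : Type*} [Field K] [LinearOrder K]
    [IsStrictOrderedRing K] {b e f : K} (he : 0 < e) (hf : 0 < f)
    (hlo : (b - 2) * e < f) (hhi : f < (b - 1) * e) :
    1 / b < e / (e + f) ∧ e / (e + f) < 1 / (b - 1) := by
  have hb : 1 < b := by nlinarith
  constructor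
  · rw [div_lt_div_iff₀ (by linarith) (by linarith)]
    linarith
  · rw [div_lt_div_iff₀ (by linarith) (by linarith)]
    linarith

theorem stmt16_general (l d : List ℤ) (h : WahlD l d)
    (hnotM : ¬ ∀ x ∈ l.tail, x = 2) :
    ∃ μ : ℚ, 1 / (l.headD 0 : ℚ) < μ ∧ μ < 1 / ((l.headD 0 : ℚ) - 1) ∧
      -1 + (d.headD 0 : ℚ) / ((d.headD 0 : ℚ) + (d.getLastD 0 : ℚ)) = -1 + μ ∧
      -1 + (d.getLastD 0 : ℚ) / ((d.headD 0 : ℚ) + (d.getLastD 0 : ℚ)) = -μ := by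
  obtain ⟨he, hf⟩ := h.one_le_headD_and_getLastD
  have hlo : (l.headD 0 - 2) * d.headD 0 < d.getLastD 0 :=
    h.getLastD_eq_or_lt.resolve_left fun h' => hnotM h'.1
  have hhi := h.getLastD_lt
  obtain ⟨hlow, hupp⟩ := one_div_lt_div_add_lt_one_div_sub_one (b := (l.headD 0 : ℚ))
    (e := d.headD 0) (f := d.getLastD 0) (by exact_mod_cast he) (by exact_mod_cast hf)
    (by exact_mod_cast hlo) (by exact_mod_cast hhi)
  refine ⟨_, hlow, hupp, rfl, ?_⟩
  field_simp
  ring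

/-- Let `[b_1,...,b_t]` be a Wahl continued fraction with `t ≥ 2`, `b_t = 2`,
not all of `b_2,...,b_t` equal to `2`.  Then the discrepancies
`m_1 = -1 + δ_1/(δ_1+δ_t)` and `m_t = -1 + δ_t/(δ_1+δ_t)` satisfy
`m_1 = -1 + μ` and `m_t = -μ` for some rational `μ` with
`1/b_1 < μ < 1/(b_1-1)`. -/
theorem stmt16 (l d : List ℤ) (h : WahlD l d) (ht : 2 ≤ l.length)
    (hlast : l.getLastD 0 = 2) (hnotM : ¬ ∀ x ∈ l.tail, x = 2) :
    ∃ μ : ℚ, 1 / (l.headD 0 : ℚ) < μ ∧ μ < 1 / ((l.headD 0 : ℚ) - 1) ∧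
      -1 + (d.headD 0 : ℚ) / ((d.headD 0 : ℚ) + (d.getLastD 0 : ℚ)) = -1 + μ ∧
      -1 + (d.getLastD 0 : ℚ) / ((d.headD 0 : ℚ) + (d.getLastD 0 : ℚ)) = -μ :=
  stmt16_general l d h hnotM
end

section
/- For every k ≥ 3, the Hirzebruch–Jung continued fraction [2,...,2, 5, k] with k-2 twos at the start equals (2k-1)²/((2k-1)(2k-3)-1). In particular this is a Wahl continued fraction of the form m²/(ma-1) with m = 2k-1, a = 2k-3. -/
/-!
Prepending `n` twos to a continued fraction of value `r` acts by the Möbius map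
`r ↦ ((n+1) r - n) / (n r - (n-1))`, the `n`-th power of `r ↦ 2 - 1/r`. Applied to
`[5, k] = (5k-1)/k` with `n = k-2` this gives `(2k-1)² / (4k² - 8k + 2)`. On the Wahl side,
`[5, 2]` is obtained from `[4]` by one right step, and each left step adds a leading `2`
and raises the last entry by one, reaching `[2,...,2, 5, k]` after `k-2` steps.
-/

theorem IsWahl.replicate_two_append {l : List ℤ} {a : ℤ} (h : IsWahl (l ++ [a])) (n : ℕ) :
    IsWahl (List.replicate n 2 ++ l ++ [a + n]) := by
  induction n with
  | zero => simpa using h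
  | succ n ih =>
    have := IsWahl.left (List.replicate n 2 ++ l) (a + n) ih
    simpa [List.replicate_succ, add_assoc] using this

theorem isWahl_five_two : IsWahl [5, 2] :=
  IsWahl.right 4 [] IsWahl.base

theorem hj_replicate_two_append (n : ℕ) {l : List ℤ} (hl : 1 ≤ hj l) :
    hj (List.replicate n 2 ++ l) = ((n + 1) * hj l - n) / (n * hj l - (n - 1)) := by
  induction n with
  | zero => simp
  | succ n ih =>
    have hn0 : (0 : ℚ) ≤ n := n.cast_nonneg
    have hn1 : ((n : ℚ) + 1) * hj l - n ≠ 0 := by nlinarith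
    rw [List.replicate_succ, List.cons_append, hj, ih]
    push_cast
    rw [one_div_div, sub_div' hn1, div_eq_div_iff hn1 (by rwa [add_sub_cancel_right])]
    ring

theorem hj_five (x : ℤ) : hj [5, x] = 5 - 1 / x := by
  simp [hj]

/-- For every `k ≥ 3` the continued fraction `[2,...,2, 5, k]` (with `k-2` twos)
is a Wahl continued fraction and equals `(2k-1)²/((2k-1)(2k-3)-1)`, i.e. it is
of the form `m²/(ma-1)` with `m = 2k-1`, `a = 2k-3`. -/
theorem stmt17 (k : ℕ) (hk : 3 ≤ k) :
    IsWahl (List.replicate (k - 2) (2 : ℤ) ++ [5, (k : ℤ)]) ∧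
    hj (List.replicate (k - 2) (2 : ℤ) ++ [5, (k : ℤ)]) =
      (2 * (k : ℚ) - 1) ^ 2 / ((2 * (k : ℚ) - 1) * (2 * (k : ℚ) - 3) - 1) := by
  obtain ⟨n, rfl⟩ : ∃ n, k = n + 2 := ⟨k - 2, by omega⟩
  simp only [Nat.add_sub_cancel]
  constructor
  · have := IsWahl.replicate_two_append (l := [5]) isWahl_five_two n
    simpa [add_comm] using this
  · have hx : (1 : ℚ) ≤ (n + 2 : ℕ) := by norm_cast; omega
    have hfive : 1 ≤ hj [5, ((n + 2 : ℕ) : ℤ)] := by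
      rw [hj_five, Int.cast_natCast]
      have : 1 / ((n + 2 : ℕ) : ℚ) ≤ 1 := div_le_one_of_le₀ hx (by positivity)
      linarith
    rw [hj_replicate_two_append n hfive, hj_five]
    push_cast
    field_simp
    ring
end
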